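/- Let n ≥ 2, let a_1, …, a_{n−1}, q_1, …, q_{n−1}, x_1, …, x_{n−1} be positive real numbers with 1 − Σ_{l=1}^{n−1} x_l/q_l > 0, and define the real polynomial g(X) = ∏_{k=1}^{n−1}(X + a_k q_k) − Σ_{l=1}^{n−1} a_l x_l ∏_{k≠l}(X + a_k q_k). Then every complex root of g is a negative real number. -/
import Mathlib


/-- Every complex root of
`g(X) = ∏ₖ(X + aₖ qₖ) - ∑ₗ aₗ xₗ ∏_{k≠l}(X + aₖ qₖ)` is a negative real number,
provided all parameters are positive and `1 - ∑ xₗ/qₗ > 0`. -/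
theorem stmt_10 (n : ℕ) (hn : 2 ≤ n) (a q x : Fin (n - 1) → ℝ)
    (ha : ∀ k, 0 < a k) (hq : ∀ k, 0 < q k) (hx : ∀ k, 0 < x k)
    (hpos : 0 < 1 - ∑ l, x l / q l) :
    ∀ z : ℂ,
      (∏ k, (z + (a k : ℂ) * (q k : ℂ)) -
        ∑ l, (a l : ℂ) * (x l : ℂ) *
          ∏ k ∈ Finset.univ.erase l, (z + (a k : ℂ) * (q k : ℂ))) = 0 →
      z.im = 0 ∧ z.re < 0 := by
  have hne : Nonempty (Fin (n - 1)) := ⟨⟨0, by omega⟩⟩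
  intro z hz
  by_cases hzero : ∃ k, z + (a k : ℂ) * q k = 0
  · obtain ⟨k, hk⟩ := hzero
    have hzk : z = -((a k : ℂ) * q k) := by linear_combination hk
    subst hzk
    constructor
    · simp
    · simp only [Complex.neg_re, Complex.mul_re, Complex.ofReal_re, Complex.ofReal_im]
      nlinarith [ha k, hq k]
  · push_neg at hzero
    have hP : (∏ k, (z + (a k : ℂ) * q k)) ≠ 0 :=
      Finset.prod_ne_zero_iff.2 fun k _ => hzero k
    have key : ∑ l, (a l : ℂ) * (x l : ℂ) * (z + (a l : ℂ) * q l)⁻¹ = 1 := by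
      have h1 : ∀ l : Fin (n - 1),
          (a l : ℂ) * (x l : ℂ) * ∏ k ∈ Finset.univ.erase l, (z + (a k : ℂ) * q k)
          = (∏ k, (z + (a k : ℂ) * q k)) *
              ((a l : ℂ) * (x l : ℂ) * (z + (a l : ℂ) * q l)⁻¹) := by
        intro l
        rw [← Finset.mul_prod_erase Finset.univ _ (Finset.mem_univ l)]
        field_simp
        rw [eq_div_iff (hzero l)]
      rw [Finset.sum_congr rfl (fun l _ => h1 l), ← Finset.mul_sum] at hz
      have h2 : (∏ k, (z + (a k : ℂ) * q k)) *
          (1 - ∑ l, (a l : ℂ) * (x l : ℂ) * (z + (a l : ℂ) * q l)⁻¹) = 0 := by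
        linear_combination hz
      have h3 := (mul_eq_zero.mp h2).resolve_left hP
      linear_combination -h3
    -- notation for normSq
    have hN : ∀ l, 0 < Complex.normSq (z + (a l : ℂ) * q l) := fun l =>
      Complex.normSq_pos.2 (hzero l)
    have him : z.im = 0 := by
      have h := congrArg Complex.im key
      simp only [Complex.im_sum, Complex.mul_im, Complex.inv_im, Complex.inv_re,
        Complex.mul_re, Complex.ofReal_re, Complex.ofReal_im, Complex.add_im,
        Complex.one_im, mul_zero, zero_mul, sub_zero, add_zero, zero_add] at h
      have hS : 0 < ∑ l, a l * x l / Complex.normSq (z + (a l : ℂ) * q l) :=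
        Finset.sum_pos (fun l _ => by have := hN l; have := ha l; have := hx l; positivity)
          Finset.univ_nonempty
      have h' : ∑ l, a l * x l * (-z.im / Complex.normSq (z + (a l : ℂ) * q l))
          = -(z.im * ∑ l, a l * x l / Complex.normSq (z + (a l : ℂ) * q l)) := by
        rw [Finset.mul_sum, ← Finset.sum_neg_distrib]
        exact Finset.sum_congr rfl fun l _ => by ring
      rw [h', neg_eq_zero] at h
      exact (mul_eq_zero.mp h).resolve_right (ne_of_gt hS)
    refine ⟨him, ?_⟩
    by_contra h0
    push_neg at h0
    have hre := congrArg Complex.re key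
    simp only [Complex.re_sum, Complex.mul_re, Complex.inv_re, Complex.inv_im,
      Complex.mul_im, Complex.ofReal_re, Complex.ofReal_im, Complex.add_re,
      Complex.add_im, Complex.one_re, mul_zero, zero_mul, sub_zero, add_zero,
      zero_add, him] at hre
    -- hre should be : ∑ l, a l * x l * ((z.re + a l * q l)/normSq ...) = 1
    have hNs : ∀ l, Complex.normSq (z + (a l:ℂ)*q l) = (z.re + a l * q l)^2 := by
      intro l
      simp [Complex.normSq_apply, him]
      ring
    have hle : ∀ l ∈ (Finset.univ : Finset (Fin (n - 1))),
        a l * x l * ((z.re + a l * q l) / Complex.normSq (z + (a l : ℂ) * q l)) ≤ x l / q l := by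
      intro l _
      rw [hNs l]
      have h1 : 0 < a l * q l := mul_pos (ha l) (hq l)
      have h2 : 0 < z.re + a l * q l := by linarith
      have heq : a l * x l * ((z.re + a l * q l) / (z.re + a l * q l) ^ 2)
          = a l * x l / (z.re + a l * q l) := by
        field_simp
      rw [heq, div_le_div_iff₀ h2 (hq l)]
      nlinarith [mul_nonneg (hx l).le h0, ha l, hx l, hq l]
    have hsum := Finset.sum_le_sum hle
    rw [hre] at hsum
    linarith
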